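/- arXiv:1006.1110 — 3 statements merged into one kernel-verified Lean document; each statement's English description precedes it below -/
import Mathlib

section
/- Let d be a positive integer, let V be the ℚ-vector space of functions from ℤ/dℤ to ℚ, and for each prime p dividing d let V_p be the subspace of functions f satisfying f(a + d/p) = f(a) for all a (i.e., functions periodic with period d/p). Then the dimension of the sum of the subspaces V_p over all primes p dividing d equals d − φ(d), where φ is Euler's totient function. -/
/-- The subspace of `ℚ`-valued functions on `ℤ/dℤ` that are periodic with period `d/q`,
i.e. invariant under translation by `d/q`. -/
def periodicSub (d q : ℕ) : Submodule ℚ (ZMod d → ℚ) where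
  carrier := {f | ∀ a : ZMod d, f (a + ((d / q : ℕ) : ZMod d)) = f a}
  add_mem' := by
    intro f g hf hg a
    simp [hf a, hg a]
  zero_mem' := by intro a; rfl
  smul_mem' := by
    intro c f hf a
    simp [hf a]

namespace PeriodicAux

variable {d : ℕ}

lemma mem_periodicSub {q : ℕ} {f : ZMod d → ℚ} :
    f ∈ periodicSub d q ↔ ∀ a : ZMod d, f (a + ((d / q : ℕ) : ZMod d)) = f a := Iff.rfl

lemma shift_nsmul {f : ZMod d → ℚ} {c : ZMod d} (hf : ∀ a, f (a + c) = f a) :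
    ∀ (n : ℕ) (a : ZMod d), f (a + n • c) = f a := by
  intro n
  induction n with
  | zero => simp
  | succ k ih =>
      intro a
      rw [succ_nsmul, ← add_assoc, hf (a + k • c), ih a]

lemma shift_zsmul (hd : 0 < d) {f : ZMod d → ℚ} {c : ZMod d} (hf : ∀ a, f (a + c) = f a) :
    ∀ (z : ℤ) (a : ZMod d), f (a + z • c) = f a := by
  intro z a
  have hz : z • c = ((z % (d : ℤ)).toNat : ℕ) • c := by
    have h0 : ((z % (d : ℤ)).toNat : ℤ) = z % (d : ℤ) :=
      Int.toNat_of_nonneg (Int.emod_nonneg z (by exact_mod_cast hd.ne'))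
    rw [zsmul_eq_mul, nsmul_eq_mul]
    congr 1
    have : (((z % (d : ℤ)).toNat : ℤ) : ZMod d) = ((z % (d : ℤ) : ℤ) : ZMod d) := by rw [h0]
    rw [show (((z % (d:ℤ)).toNat : ℕ) : ZMod d) = (((z % (d:ℤ)).toNat : ℤ) : ZMod d) by push_cast; ring,
      this, ZMod.intCast_mod]
  rw [hz]
  exact shift_nsmul hf _ a

lemma periodicSub_le (hd : 0 < d) {n₁ n₂ : ℕ} (h : n₁ ∣ n₂) (h2 : n₂ ∣ d) :
    periodicSub d n₂ ≤ periodicSub d n₁ := by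
  intro f hf a
  obtain ⟨l, hl⟩ := h
  obtain ⟨k, hk⟩ := h2
  have hn₂ : n₂ ≠ 0 := fun h0 => hd.ne' (by simp [hk, h0])
  have hn₁ : n₁ ≠ 0 := fun h0 => hn₂ (by simp [hl, h0])
  have hdiv : d / n₁ = l * (d / n₂) := by
    subst hl hk
    rw [Nat.mul_div_cancel_left _ (Nat.pos_of_ne_zero (by positivity)),
      show n₁ * l * k = n₁ * (l * k) by ring,
      Nat.mul_div_cancel_left _ (Nat.pos_of_ne_zero hn₁)]
  have hc : ((d / n₁ : ℕ) : ZMod d) = l • ((d / n₂ : ℕ) : ZMod d) := by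
    rw [hdiv, nsmul_eq_mul]; push_cast; ring
  rw [hc]
  exact shift_nsmul hf l a

lemma inf_eq (hd : 0 < d) {p q m : ℕ} (hp : p.Prime) (hq : q.Prime) (hne : p ≠ q)
    (h : p * (q * m) ∣ d) :
    periodicSub d (p * m) ⊓ periodicSub d (q * m) = periodicSub d (p * (q * m)) := by
  have hm : m ≠ 0 := by rintro rfl; rw [mul_zero, mul_zero] at h; exact absurd (zero_dvd_iff.mp h) hd.ne'
  apply le_antisymm
  · rintro f ⟨hf1, hf2⟩
    obtain ⟨s, hs⟩ := h
    have hpm0 : 0 < p * m := Nat.mul_pos hp.pos (Nat.pos_of_ne_zero hm)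
    have hqm0 : 0 < q * m := Nat.mul_pos hq.pos (Nat.pos_of_ne_zero hm)
    have hpqm0 : 0 < p * (q * m) := Nat.mul_pos hp.pos hqm0
    have h1 : d / (p * (q * m)) = s := by rw [hs, Nat.mul_div_cancel_left _ hpqm0]
    have h2 : d / (p * m) = q * s := by
      rw [hs, show p * (q * m) * s = p * m * (q * s) by ring, Nat.mul_div_cancel_left _ hpm0]
    have h3 : d / (q * m) = p * s := by
      rw [hs, show p * (q * m) * s = q * m * (p * s) by ring, Nat.mul_div_cancel_left _ hqm0]
    have hf1' : ∀ a : ZMod d, f (a + ((d / (p * m) : ℕ) : ZMod d)) = f a := hf1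
    have hf2' : ∀ a : ZMod d, f (a + ((d / (q * m) : ℕ) : ZMod d)) = f a := hf2
    rw [h2] at hf1'
    rw [h3] at hf2'
    intro a
    show f (a + ((d / (p * (q * m)) : ℕ) : ZMod d)) = f a
    have hco : Nat.Coprime p q := (Nat.coprime_primes hp hq).mpr hne
    have hbez : (1 : ℤ) = p * Nat.gcdA p q + q * Nat.gcdB p q := by
      have := Nat.gcd_eq_gcd_ab p q
      rwa [hco, Nat.cast_one] at this
    rw [h1]
    set A := Nat.gcdA p q
    set B := Nat.gcdB p q
    have key : ((s : ℕ) : ZMod d) = B • ((q * s : ℕ) : ZMod d) + A • ((p * s : ℕ) : ZMod d) := by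
      rw [zsmul_eq_mul, zsmul_eq_mul]
      have : ((s : ℤ) : ZMod d) = (((p * A + q * B) * s : ℤ) : ZMod d) := by
        rw [← hbez]; push_cast; ring
      push_cast at this ⊢
      linear_combination this
    rw [key, ← add_assoc]
    rw [shift_zsmul hd hf2' A (a + B • ((q * s : ℕ) : ZMod d)),
      shift_zsmul hd hf1' B a]
  · exact le_inf (periodicSub_le hd ⟨q, by ring⟩ h) (periodicSub_le hd ⟨p, by ring⟩ h)

lemma finrank_periodicSub (hd : 0 < d) {q : ℕ} (hq : q ∣ d) :
    Module.finrank ℚ (periodicSub d q) = d / q := by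
  haveI : NeZero d := ⟨hd.ne'⟩
  have hq0 : 0 < q := Nat.pos_of_dvd_of_pos hq hd
  set e := d / q with he
  have hed : e ∣ d := Nat.div_dvd_of_dvd hq
  have he0 : 0 < e := Nat.div_pos (Nat.le_of_dvd hd hq) hq0
  haveI : NeZero e := ⟨he0.ne'⟩
  let Φ : (ZMod e → ℚ) →ₗ[ℚ] (ZMod d → ℚ) :=
    { toFun := fun g => g ∘ (ZMod.castHom hed (ZMod e))
      map_add' := fun _ _ => rfl
      map_smul' := fun _ _ => rfl }
  have hrange : LinearMap.range Φ = periodicSub d q := by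
    apply le_antisymm
    · rintro _ ⟨g, rfl⟩ a
      show g (ZMod.castHom hed (ZMod e) (a + ((e : ℕ) : ZMod d)))
        = g (ZMod.castHom hed (ZMod e) a)
      rw [map_add, map_natCast, ZMod.natCast_self, add_zero]
    · intro f hf
      rw [mem_periodicSub] at hf
      refine ⟨fun b => f ((b.val : ZMod d)), funext fun a => ?_⟩
      show f ((((ZMod.castHom hed (ZMod e)) a).val : ZMod d)) = f a
      have hval : ((ZMod.castHom hed (ZMod e)) a).val = a.val % e := by
        rw [ZMod.castHom_apply, ← ZMod.natCast_val, ZMod.val_natCast]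
      rw [hval]
      have hsplit : ((a.val % e : ℕ) : ZMod d) + (a.val / e) • ((e : ℕ) : ZMod d) = a := by
        have hmd : a.val % e + e * (a.val / e) = a.val := Nat.mod_add_div a.val e
        have h2' : (((a.val % e : ℕ) : ZMod d) + ((e * (a.val / e) : ℕ) : ZMod d)) = a := by
          rw [← Nat.cast_add, hmd]
          exact ZMod.natCast_rightInverse a
        rw [nsmul_eq_mul]
        conv_rhs => rw [← h2']
        push_cast
        ring
      conv_rhs => rw [← hsplit]
      exact (shift_nsmul hf _ _).symm
  have hinj : Function.Injective Φ := by
    intro g₁ g₂ hgs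
    funext b
    obtain ⟨k, rfl⟩ := ZMod.natCast_zmod_surjective b
    have := congrFun hgs ((k : ZMod d))
    simpa [Φ] using this
  rw [← hrange, LinearMap.finrank_range_of_inj hinj,
    Module.finrank_fintype_fun_eq_card, ZMod.card]

/-- The averaging projection onto `periodicSub d n`. -/
noncomputable def avg (d n : ℕ) : (ZMod d → ℚ) →ₗ[ℚ] (ZMod d → ℚ) where
  toFun := fun f a => (n : ℚ)⁻¹ * ∑ j ∈ Finset.range n, f (a + j • ((d / n : ℕ) : ZMod d))
  map_add' := by
    intro f g
    funext a
    simp [Finset.sum_add_distrib, mul_add]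
  map_smul' := by
    intro c f
    funext a
    simp only [Pi.smul_apply, smul_eq_mul, RingHom.id_apply, ← Finset.mul_sum]
    ring

lemma avg_eq_self {n : ℕ} (hn : n ≠ 0) {f : ZMod d → ℚ} (hf : f ∈ periodicSub d n) :
    avg d n f = f := by
  rw [mem_periodicSub] at hf
  funext a
  show (n : ℚ)⁻¹ * ∑ j ∈ Finset.range n, f (a + j • ((d / n : ℕ) : ZMod d)) = f a
  have : ∀ j ∈ Finset.range n, f (a + j • ((d / n : ℕ) : ZMod d)) = f a :=
    fun j _ => shift_nsmul hf j a
  rw [Finset.sum_congr rfl this, Finset.sum_const, Finset.card_range, nsmul_eq_mul]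
  field_simp

lemma avg_mem_periodic {n : ℕ} (hnd : n ∣ d) (hn : n ≠ 0) (f : ZMod d → ℚ) :
    avg d n f ∈ periodicSub d n := by
  rw [mem_periodicSub]
  intro a
  show (n : ℚ)⁻¹ * ∑ j ∈ Finset.range n,
      f (a + ((d / n : ℕ) : ZMod d) + j • ((d / n : ℕ) : ZMod d))
    = (n : ℚ)⁻¹ * ∑ j ∈ Finset.range n, f (a + j • ((d / n : ℕ) : ZMod d))
  congr 1
  set c := ((d / n : ℕ) : ZMod d) with hc
  set g : ℕ → ℚ := fun j => f (a + j • c) with hg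
  have hterm : ∀ j, f (a + c + j • c) = g (j + 1) := by
    intro j
    simp only [hg, succ_nsmul]
    congr 1
    rw [add_assoc, add_comm c ((j : ℕ) • c)]
  have hgn : g n = g 0 := by
    have hzero : (n : ℕ) • c = 0 := by
      rw [hc, nsmul_eq_mul]
      rw [show ((n : ℕ) : ZMod d) * ((d / n : ℕ) : ZMod d) = ((n * (d / n) : ℕ) : ZMod d) by push_cast; ring]
      rw [Nat.mul_div_cancel' hnd, ZMod.natCast_self]
    show f (a + n • c) = f (a + 0 • c)
    rw [hzero, zero_nsmul]
  calc ∑ j ∈ Finset.range n, f (a + c + j • c)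
      = ∑ j ∈ Finset.range n, g (j + 1) := Finset.sum_congr rfl fun j _ => hterm j
    _ = ∑ j ∈ Finset.range n, g j := by
        have h1 := Finset.sum_range_succ' g n
        have h2 := Finset.sum_range_succ g n
        rw [h2] at h1
        rw [hgn] at h1
        linarith

lemma avg_mem_of_mem {n k : ℕ} {f : ZMod d → ℚ} (hf : f ∈ periodicSub d k) :
    avg d n f ∈ periodicSub d k := by
  rw [mem_periodicSub] at hf ⊢
  intro a
  show (n : ℚ)⁻¹ * ∑ j ∈ Finset.range n,
      f (a + ((d / k : ℕ) : ZMod d) + j • ((d / n : ℕ) : ZMod d))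
    = (n : ℚ)⁻¹ * ∑ j ∈ Finset.range n, f (a + j • ((d / n : ℕ) : ZMod d))
  congr 1
  refine Finset.sum_congr rfl fun j _ => ?_
  rw [add_right_comm, hf]

lemma distrib_fin (π : (ZMod d → ℚ) →ₗ[ℚ] (ZMod d → ℚ)) (s : Finset ℕ)
    (U : ℕ → Submodule ℚ (ZMod d → ℚ)) (W : Submodule ℚ (ZMod d → ℚ))
    (hW : ∀ f ∈ W, π f = f) (hU : ∀ p ∈ s, ∀ f ∈ U p, π f ∈ U p ⊓ W) :
    (⨆ p ∈ s, U p) ⊓ W = ⨆ p ∈ s, (U p ⊓ W) := by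
  apply le_antisymm
  · intro f hf
    have h1 : π f ∈ Submodule.map π (⨆ p ∈ s, U p) := Submodule.mem_map_of_mem hf.1
    simp only [Submodule.map_iSup] at h1
    have h2 : (⨆ p ∈ s, Submodule.map π (U p)) ≤ ⨆ p ∈ s, (U p ⊓ W) :=
      iSup₂_mono fun p hp => Submodule.map_le_iff_le_comap.mpr fun g hg => hU p hp g hg
    have := h2 h1
    rwa [hW f hf.2] at this
  · refine le_inf (iSup₂_mono fun p hp => inf_le_left) (iSup₂_le fun p hp => inf_le_right)

lemma main_aux (hd : 0 < d) (s : Finset ℕ) :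
    ∀ m : ℕ, m ∣ d → (∀ p ∈ s, p.Prime ∧ ¬ p ∣ m ∧ p * m ∣ d) →
    (Module.finrank ℚ ↥(⨆ p ∈ s, periodicSub d (p * m)) : ℚ)
      = (d : ℚ) / m * (1 - ∏ p ∈ s, (1 - (p : ℚ)⁻¹)) := by
  haveI : NeZero d := ⟨hd.ne'⟩
  induction s using Finset.induction_on with
  | empty => intro m _ _; simp
  | @insert q s' hqs ih =>
      intro m hmd hps
      obtain ⟨hqprime, hqdm, hqmd⟩ := hps q (Finset.mem_insert_self q s')
      have hs' : ∀ p ∈ s', p.Prime ∧ ¬ p ∣ m ∧ p * m ∣ d :=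
        fun p hp => hps p (Finset.mem_insert_of_mem hp)
      have hm0 : m ≠ 0 := (Nat.pos_of_dvd_of_pos hmd hd).ne'
      have hqm0 : q * m ≠ 0 := (Nat.pos_of_dvd_of_pos hqmd hd).ne'
      have hq0 : (q : ℚ) ≠ 0 := Nat.cast_ne_zero.mpr hqprime.pos.ne'
      have hm0' : (m : ℚ) ≠ 0 := Nat.cast_ne_zero.mpr hm0
      rw [Finset.iSup_insert]
      set B := periodicSub d (q * m) with hB
      set A := ⨆ p ∈ s', periodicSub d (p * m) with hA
      have hinner : ∀ p ∈ s', p.Prime ∧ ¬ p ∣ q * m ∧ p * (q * m) ∣ d := by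
        intro p hp
        obtain ⟨hpp, hpm, hpmd⟩ := hs' p hp
        have hne : p ≠ q := by rintro rfl; exact hqs hp
        have hco : Nat.Coprime p q := (Nat.coprime_primes hpp hqprime).mpr hne
        refine ⟨hpp, ?_, ?_⟩
        · intro hdvd
          rw [mul_comm] at hdvd
          exact hpm (hco.dvd_of_dvd_mul_right hdvd)
        · have hg : Nat.gcd (p * m) (q * m) = m := by
            rw [Nat.gcd_mul_right, hco, one_mul]
          have hl : Nat.lcm (p * m) (q * m) = p * (q * m) := by
            have h1 : Nat.gcd (p * m) (q * m) * Nat.lcm (p * m) (q * m) = p * m * (q * m) :=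
              Nat.gcd_mul_lcm _ _
            rw [hg] at h1
            exact Nat.eq_of_mul_eq_mul_left (Nat.pos_of_ne_zero hm0) (by rw [h1]; ring)
          exact hl ▸ Nat.lcm_dvd hpmd hqmd
      have hinf : B ⊓ A = ⨆ p ∈ s', periodicSub d (p * (q * m)) := by
        rw [inf_comm, hA, hB]
        rw [distrib_fin (avg d (q * m)) s' (fun p => periodicSub d (p * m))
          (periodicSub d (q * m))
          (fun f hf => avg_eq_self hqm0 hf)
          (fun p hp f hf => ⟨avg_mem_of_mem hf, avg_mem_periodic hqmd hqm0 f⟩)]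
        refine iSup_congr fun p => iSup_congr fun hp => ?_
        obtain ⟨hpp, _, _⟩ := hs' p hp
        have hne : p ≠ q := by rintro rfl; exact hqs hp
        exact inf_eq hd hpp hqprime hne (hinner p hp).2.2
      have hdim := Submodule.finrank_sup_add_finrank_inf_eq B A
      have e1 : (Module.finrank ℚ ↥(B ⊓ A) : ℚ)
          = (d : ℚ) / (q * m) * (1 - ∏ p ∈ s', (1 - (p : ℚ)⁻¹)) := by
        rw [hinf]
        have := ih (q * m) hqmd hinner
        rw [this]
        push_cast
        ring
      have e2 : (Module.finrank ℚ ↥A : ℚ)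
          = (d : ℚ) / m * (1 - ∏ p ∈ s', (1 - (p : ℚ)⁻¹)) := ih m hmd hs'
      have e3 : (Module.finrank ℚ ↥B : ℚ) = (d : ℚ) / (q * m) := by
        rw [hB, finrank_periodicSub hd hqmd, Nat.cast_div hqmd
          (Nat.cast_ne_zero.mpr hqm0)]
        push_cast
        ring
      have hcast : (Module.finrank ℚ ↥(B ⊔ A) : ℚ) + (Module.finrank ℚ ↥(B ⊓ A) : ℚ)
          = (Module.finrank ℚ ↥B : ℚ) + (Module.finrank ℚ ↥A : ℚ) := by
        exact_mod_cast hdim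
      rw [e1, e2, e3] at hcast
      rw [Finset.prod_insert hqs]
      have hF : (Module.finrank ℚ ↥(B ⊔ A) : ℚ)
          = (d : ℚ) / (q * m) + (d : ℚ) / m * (1 - ∏ p ∈ s', (1 - (p : ℚ)⁻¹))
            - (d : ℚ) / (q * m) * (1 - ∏ p ∈ s', (1 - (p : ℚ)⁻¹)) := by
        linarith [hcast]
      rw [hF]
      field_simp
      ring

end PeriodicAux

theorem stmt0 (d : ℕ) (hd : 0 < d) :
    Module.finrank ℚ
      ↥(⨆ p ∈ {p : ℕ | p.Prime ∧ p ∣ d}, periodicSub d p) = d - Nat.totient d := by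
  haveI : NeZero d := ⟨hd.ne'⟩
  have hset : {p : ℕ | p.Prime ∧ p ∣ d} = ↑d.primeFactors := by
    ext p
    simp [Nat.mem_primeFactors, hd.ne']
  have hsup : (⨆ p ∈ {p : ℕ | p.Prime ∧ p ∣ d}, periodicSub d p)
      = ⨆ p ∈ d.primeFactors, periodicSub d (p * 1) := by
    rw [hset]
    simp [mul_one]
  rw [hsup]
  have hmain := PeriodicAux.main_aux hd d.primeFactors 1 (one_dvd d)
    (fun p hp => ⟨Nat.prime_of_mem_primeFactors hp,
      fun h => (Nat.prime_of_mem_primeFactors hp).ne_one (Nat.dvd_one.mp h),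
      by rw [mul_one]; exact Nat.dvd_of_mem_primeFactors hp⟩)
  have htot := Nat.totient_eq_mul_prod_factors d
  have : (Module.finrank ℚ
      ↥(⨆ p ∈ d.primeFactors, periodicSub d (p * 1)) : ℚ) = ((d - Nat.totient d : ℕ) : ℚ) := by
    rw [Nat.cast_sub (Nat.totient_le d), hmain, htot]
    push_cast
    ring
  exact_mod_cast this
end

section
/- Let d be a positive integer, ζ a primitive d-th root of unity in ℂ, and μ : ℤ/dℤ → ℚ a function with ∑_{i=0}^{d−1} ζ^i μ(i) = 0. Then μ lies in the sum of the subspaces V_p over primes p dividing d, where V_p is the space of ℚ-valued functions on ℤ/dℤ periodic with period d/p. -/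
open Polynomial

noncomputable section

lemma Nat.exists_prime_dvd_and_dvd_div_of_mem_properDivisors {d e : ℕ}
    (he : e ∈ d.properDivisors) : ∃ p, p.Prime ∧ p ∣ d ∧ e ∣ d / p := by
  obtain ⟨⟨c, rfl⟩, hlt⟩ := Nat.mem_properDivisors.mp he
  have hc : c ≠ 1 := by rintro rfl; simp at hlt
  refine ⟨c.minFac, Nat.minFac_prime hc, (Nat.minFac_dvd c).mul_left e, ?_⟩
  rw [Nat.mul_div_assoc e (Nat.minFac_dvd c)]
  exact dvd_mul_right e _

lemma AddMonoidAlgebra.coeff_add_of_mul_single_eq {R G : Type*} [Semiring R] [AddGroup G]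
    {F : AddMonoidAlgebra R G} {t : G} (h : F * single t 1 = F) (a : G) :
    F.coeff (a + t) = F.coeff a := by
  conv_lhs => rw [← h]
  rw [coeff_mul_single_apply, mul_one, add_neg_cancel_right]

def normPoly (R : Type*) [Semiring R] (d p : ℕ) : R[X] :=
  ∑ k ∈ Finset.range p, (X ^ (d / p)) ^ k

lemma normPoly_mul_X_pow_sub_one {R : Type*} [CommRing R] {d p : ℕ} (h : p ∣ d) :
    normPoly R d p * (X ^ (d / p) - 1) = X ^ d - 1 := by
  rw [normPoly, geom_sum_mul, ← pow_mul, Nat.div_mul_cancel h]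

lemma isCoprime_normPoly_X_pow_sub_one {K : Type*} [Field K] {d p : ℕ} (hd : (d : K) ≠ 0)
    (h : p ∣ d) : IsCoprime (normPoly K d p) (X ^ (d / p) - 1) := by
  apply Separable.isCoprime
  rw [normPoly_mul_X_pow_sub_one h, ← C_1]
  exact separable_X_pow_sub_C 1 hd one_ne_zero

lemma cyclotomic_mem_span_normPoly {K : Type*} [Field K] {d : ℕ} (hd : (d : K) ≠ 0) :
    cyclotomic d K ∈
      Ideal.span (insert (X ^ d - 1) (normPoly K d '' {p | p.Prime ∧ p ∣ d})) := by
  set I := Ideal.span (insert (X ^ d - 1) (normPoly K d '' {p | p.Prime ∧ p ∣ d}))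
  set g := Submodule.IsPrincipal.generator I
  have hg : ∀ x ∈ insert (X ^ d - 1) (normPoly K d '' {p | p.Prime ∧ p ∣ d}), g ∣ x :=
    fun x hx ↦ (Submodule.IsPrincipal.mem_iff_generator_dvd I).mp (Ideal.subset_span hx)
  have hd0 : 0 < d := Nat.pos_of_ne_zero (by rintro rfl; simp at hd)
  have hcoprime : ∀ e ∈ d.properDivisors, IsCoprime g (cyclotomic e K) := by
    intro e he
    obtain ⟨p, hp, hpd, ⟨k, hk⟩⟩ := Nat.exists_prime_dvd_and_dvd_div_of_mem_properDivisors he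
    have hgN : g ∣ normPoly K d p := hg _ (Set.mem_insert_of_mem _ ⟨p, ⟨hp, hpd⟩, rfl⟩)
    have hΦe : cyclotomic e K ∣ X ^ (d / p) - 1 :=
      (cyclotomic.dvd_X_pow_sub_one e K).trans (hk ▸ pow_one_sub_dvd_pow_mul_sub_one X e k)
    exact ((isCoprime_normPoly_X_pow_sub_one hd hpd).of_isCoprime_of_dvd_left hgN)
      |>.of_isCoprime_of_dvd_right hΦe
  have hprod : X ^ d - 1 = cyclotomic d K * ∏ e ∈ d.properDivisors, cyclotomic e K := by
    rw [← prod_cyclotomic_eq_X_pow_sub_one hd0, ← Nat.cons_self_properDivisors hd0.ne',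
      Finset.prod_cons]
  rw [Submodule.IsPrincipal.mem_iff_generator_dvd I]
  refine (IsCoprime.prod_right hcoprime).dvd_of_dvd_mul_right ?_
  rw [← hprod]
  exact hg _ (Set.mem_insert _ _)

def toZModAlgebra (R : Type*) [CommSemiring R] (d : ℕ) : R[X] →+* AddMonoidAlgebra R (ZMod d) :=
  (AddMonoidAlgebra.mapDomainRingHom R (Nat.castRingHom (ZMod d)).toAddMonoidHom).comp
    (toFinsuppIso R).toRingHom

section CommSemiring

variable {R : Type*} [CommSemiring R] {d : ℕ}

lemma toZModAlgebra_monomial (n : ℕ) (a : R) :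
    toZModAlgebra R d (monomial n a) = AddMonoidAlgebra.single (n : ZMod d) a := by
  simp [toZModAlgebra]

lemma coeff_toZModAlgebra_sum_monomial [NeZero d] (μ : ZMod d → R) :
    ⇑(toZModAlgebra R d (∑ i : ZMod d, monomial i.val (μ i))).coeff = μ := by
  ext a
  simp [toZModAlgebra_monomial, AddMonoidAlgebra.coeff_sum, Finsupp.single_apply]

end CommSemiring

section CommRing

variable {R : Type*} [CommRing R] {d : ℕ}

lemma toZModAlgebra_X_pow_sub_one : toZModAlgebra R d (X ^ d - 1) = 0 := by
  rw [map_sub, map_one, X_pow_eq_monomial, toZModAlgebra_monomial, ZMod.natCast_self,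
    ← AddMonoidAlgebra.one_def, sub_self]

lemma toZModAlgebra_normPoly_mul_single {p : ℕ} (h : p ∣ d) :
    toZModAlgebra R d (normPoly R d p) * AddMonoidAlgebra.single ((d / p : ℕ) : ZMod d) 1 =
      toZModAlgebra R d (normPoly R d p) := by
  have : normPoly R d p * X ^ (d / p) = normPoly R d p + (X ^ d - 1) := by
    rw [← normPoly_mul_X_pow_sub_one h]; ring
  rw [← toZModAlgebra_monomial, ← X_pow_eq_monomial, ← map_mul, this, map_add,
    toZModAlgebra_X_pow_sub_one, add_zero]

end CommRing

lemma coeff_toZModAlgebra_mem_iSup_periodicSub {d : ℕ} {P : ℚ[X]}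
    (hP : P ∈ Ideal.span (insert (X ^ d - 1) (normPoly ℚ d '' {p | p.Prime ∧ p ∣ d}))) :
    ⇑(toZModAlgebra ℚ d P).coeff ∈ ⨆ p ∈ {p : ℕ | p.Prime ∧ p ∣ d}, periodicSub d p := by
  suffices ∀ Q : ℚ[X], ⇑(toZModAlgebra ℚ d (Q * P)).coeff ∈
      ⨆ p ∈ {p : ℕ | p.Prime ∧ p ∣ d}, periodicSub d p by
    simpa using this 1
  induction hP using Submodule.span_induction with
  | mem x hx =>
    intro Q
    rcases hx with rfl | ⟨p, hp, rfl⟩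
    · simp [toZModAlgebra_X_pow_sub_one]
    · refine Submodule.mem_iSup_of_mem p (Submodule.mem_iSup_of_mem hp fun a ↦ ?_)
      apply AddMonoidAlgebra.coeff_add_of_mul_single_eq
      rw [map_mul, mul_assoc, toZModAlgebra_normPoly_mul_single hp.2]
  | zero => simp
  | add x y _ _ hx hy =>
    intro Q
    rw [mul_add, map_add, AddMonoidAlgebra.coeff_add, Finsupp.coe_add]
    exact add_mem (hx Q) (hy Q)
  | smul a x _ hx =>
    intro Q
    rw [smul_eq_mul, ← mul_assoc]
    exact hx (Q * a)

end

theorem stmt1 (d : ℕ) (hd : 0 < d) [NeZero d] (ζ : ℂ) (hζ : IsPrimitiveRoot ζ d)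
    (μ : ZMod d → ℚ)
    (hμ : ∑ i : ZMod d, (μ i : ℂ) * ζ ^ (i.val) = 0) :
    μ ∈ ⨆ p ∈ {p : ℕ | p.Prime ∧ p ∣ d}, periodicSub d p := by
  set P : ℚ[X] := ∑ i : ZMod d, monomial i.val (μ i)
  have hPζ : aeval ζ P = 0 := by simpa [P, aeval_monomial, mul_comm] using hμ
  have hΦP : cyclotomic d ℚ ∣ P := cyclotomic_eq_minpoly_rat hζ hd ▸ minpoly.dvd ℚ ζ hPζ
  have hP := Ideal.mem_of_dvd _ hΦP (cyclotomic_mem_span_normPoly (Nat.cast_ne_zero.mpr hd.ne'))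
  rw [← coeff_toZModAlgebra_sum_monomial μ]
  exact coeff_toZModAlgebra_mem_iSup_periodicSub hP
end

section
/- Let l be a prime, G a finite group, and suppose there are chains of subgroups G_1^{(1)} ⊲ ⋯ ⊲ G_r^{(1)} = G and G_1^{(2)} ⊲ ⋯ ⊲ G_s^{(2)} = G, each subgroup normal in the next with index coprime to l, where G_1^{(1)} and G_1^{(2)} are products of nonabelian finite simple groups each of order divisible by l. Then G_1^{(1)} = G_1^{(2)}. -/
/-!
A finite product `P` of nonabelian simple groups, each of order divisible by `l`, has no proper
normal subgroup of index prime to `l`: a normal subgroup of `P` projecting onto a perfect factor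
contains that whole factor, so a proper one lies in the kernel of some projection, and then `l`
divides its index. Hence if `P ≤ H_{i+1}` and `H_i ⊴ H_{i+1}` has index prime to `l`, the
preimage of `H_i` in `P` is all of `P`. Descending the other chain, each bottom group lies in
the other.
-/

open Subgroup
open scoped commutatorElement

theorem IsSimpleGroup.isPerfect_of_exists_mul_ne {G : Type*} [Group G] [IsSimpleGroup G]
    (h : ∃ a b : G, a * b ≠ b * a) : Group.IsPerfect G := by
  refine ⟨(commutator_normal (⊤ : Subgroup G) ⊤).eq_bot_or_eq_top.resolve_left
    fun hbot => ?_⟩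
  obtain ⟨a, b, hab⟩ := h
  have := (commutator_eq_bot_iff G).mp hbot
  exact hab (mul_comm' a b)

namespace Subgroup

variable {ι : Type*} {K : ι → Type*} [∀ i, Group (K i)]

theorem mulSingle_mem_of_map_eval_eq_top [DecidableEq ι] {N : Subgroup (∀ i, K i)} [N.Normal]
    {i : ι} [Group.IsPerfect (K i)] (hN : N.map (Pi.evalMonoidHom K i) = ⊤) (k : K i) :
    Pi.mulSingle i k ∈ N := by
  suffices _root_.commutator (K i) ≤ N.comap (MonoidHom.mulSingle K i) from
    this Group.IsPerfect.mem_commutator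
  rw [_root_.commutator_def, commutator_le]
  rintro a - b -
  obtain ⟨n, hn, rfl⟩ : ∃ n ∈ N, n i = a := by simpa using hN.ge (mem_top a)
  have hmem : ⁅n, Pi.mulSingle i b⁆ ∈ N := by
    have := N.mul_mem hn (‹N.Normal›.conj_mem _ (N.inv_mem hn) (Pi.mulSingle i b))
    simpa only [commutatorElement_def, mul_assoc] using this
  show Pi.mulSingle i ⁅n i, b⁆ ∈ N
  convert hmem using 1
  funext j
  rcases eq_or_ne j i with rfl | hj
  · simp [commutatorElement_def]
  · simp [commutatorElement_def, Pi.mulSingle_eq_of_ne hj]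

theorem exists_le_ker_eval_of_ne_top [Finite ι] [∀ i, IsSimpleGroup (K i)]
    [∀ i, Group.IsPerfect (K i)] (N : Subgroup (∀ i, K i)) [hN : N.Normal] (hNtop : N ≠ ⊤) :
    ∃ i, N ≤ (Pi.evalMonoidHom K i).ker := by
  classical
  by_contra! h
  refine hNtop (eq_top_iff.mpr fun x _ => pi_mem_of_mulSingle_mem x fun i => ?_)
  refine mulSingle_mem_of_map_eval_eq_top ?_ (x i)
  have hsurj : Function.Surjective (Pi.evalMonoidHom K i) := Function.surjective_eval i
  exact (hN.map _ hsurj).eq_bot_or_eq_top.resolve_left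
    fun hbot => h i ((map_eq_bot_iff N).mp hbot)

theorem eq_top_of_coprime_index_pi [Finite ι] [∀ i, IsSimpleGroup (K i)]
    [∀ i, Group.IsPerfect (K i)] {l : ℕ} (hl : l ≠ 1) (hdvd : ∀ i, l ∣ Nat.card (K i))
    (N : Subgroup (∀ i, K i)) [N.Normal] (hN : N.index.Coprime l) : N = ⊤ := by
  by_contra hNtop
  obtain ⟨i, hi⟩ := exists_le_ker_eval_of_ne_top N hNtop
  have hsurj : Function.Surjective (Pi.evalMonoidHom K i) := Function.surjective_eval i
  have hker : (Pi.evalMonoidHom K i).ker.index = Nat.card (K i) := by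
    rw [index_ker, MonoidHom.range_eq_top_of_surjective _ hsurj, card_top]
  exact hl (hN.symm.eq_one_of_dvd ((hdvd i).trans (hker ▸ index_dvd_of_le hi)))

theorem eq_top_of_coprime_index_of_mulEquiv_pi [Finite ι] [∀ i, IsSimpleGroup (K i)]
    [∀ i, Group.IsPerfect (K i)] {l : ℕ} (hl : l ≠ 1) (hdvd : ∀ i, l ∣ Nat.card (K i))
    {A : Type*} [Group A] (e : A ≃* ∀ i, K i) (N : Subgroup A) [N.Normal]
    (hN : N.index.Coprime l) : N = ⊤ := by
  have hcomap : N.comap e.symm.toMonoidHom = ⊤ := eq_top_of_coprime_index_pi hl hdvd _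
    (by rwa [index_comap_of_surjective _ e.symm.surjective])
  exact eq_top_iff.mpr fun a _ => by simpa using hcomap.ge (mem_top (e a))

end Subgroup

section CoprimeIndexChain

variable {G : Type*} [Group G] {l : ℕ} {A : Subgroup G}

theorem le_of_le_of_coprime_index_subgroupOf
    (hA : ∀ N : Subgroup A, N.Normal → N.index.Coprime l → N = ⊤) {B C : Subgroup G}
    (hAC : A ≤ C) [hBC : (B.subgroupOf C).Normal] (hindex : (B.subgroupOf C).index.Coprime l) :
    A ≤ B := by
  set N := (B.subgroupOf C).comap (inclusion hAC)
  have hN : N.index.Coprime l := by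
    refine hindex.coprime_dvd_left ?_
    rw [index_comap]
    exact relIndex_dvd_index_of_normal _ _
  have hNtop : N = ⊤ := hA N (hBC.comap _) hN
  intro a ha
  simpa [N, mem_subgroupOf] using hNtop.ge (mem_top ⟨a, ha⟩)

theorem le_of_coprime_index_chain
    (hA : ∀ N : Subgroup A, N.Normal → N.index.Coprime l → N = ⊤)
    (s : ℕ) (H : ℕ → Subgroup G) (htop : H (s - 1) = ⊤)
    (hnorm : ∀ i, i + 1 < s → ((H i).subgroupOf (H (i + 1))).Normal)
    (hcop : ∀ i, i + 1 < s → Nat.Coprime ((H i).subgroupOf (H (i + 1))).index l) :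
    A ≤ H 0 := by
  suffices ∀ n i, i + n = s - 1 → A ≤ H i from this (s - 1) 0 (zero_add _)
  intro n
  induction n with
  | zero => rintro i rfl; simp [htop]
  | succ n ih =>
    intro i hi
    have hs : i + 1 < s := by omega
    have := hnorm i hs
    exact le_of_le_of_coprime_index_subgroupOf hA (ih (i + 1) (by omega)) (hcop i hs)

end CoprimeIndexChain

theorem stmt8_general (l : ℕ) (hl : l.Prime) {G : Type*} [Group G]
    (r s : ℕ)
    (H1 H2 : ℕ → Subgroup G)
    (htop1 : H1 (r - 1) = ⊤) (htop2 : H2 (s - 1) = ⊤)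
    (hnorm1 : ∀ i, i + 1 < r → ((H1 i).subgroupOf (H1 (i + 1))).Normal)
    (hcop1 : ∀ i, i + 1 < r → Nat.Coprime ((H1 i).subgroupOf (H1 (i + 1))).index l)
    (hnorm2 : ∀ i, i + 1 < s → ((H2 i).subgroupOf (H2 (i + 1))).Normal)
    (hcop2 : ∀ i, i + 1 < s → Nat.Coprime ((H2 i).subgroupOf (H2 (i + 1))).index l)
    (m1 : ℕ) (K1 : Fin m1 → Type*) [∀ i, Group (K1 i)]
    (hsimple1 : ∀ i, IsSimpleGroup (K1 i))
    (hnonab1 : ∀ i, ∃ a b : K1 i, a * b ≠ b * a)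
    (hdvd1 : ∀ i, l ∣ Nat.card (K1 i))
    (e1 : H1 0 ≃* ∀ i, K1 i)
    (m2 : ℕ) (K2 : Fin m2 → Type*) [∀ i, Group (K2 i)]
    (hsimple2 : ∀ i, IsSimpleGroup (K2 i))
    (hnonab2 : ∀ i, ∃ a b : K2 i, a * b ≠ b * a)
    (hdvd2 : ∀ i, l ∣ Nat.card (K2 i))
    (e2 : H2 0 ≃* ∀ i, K2 i) :
    H1 0 = H2 0 := by
  have : ∀ i, IsSimpleGroup (K1 i) := hsimple1
  have : ∀ i, IsSimpleGroup (K2 i) := hsimple2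
  have : ∀ i, Group.IsPerfect (K1 i) := fun i =>
    (hsimple1 i).isPerfect_of_exists_mul_ne (hnonab1 i)
  have : ∀ i, Group.IsPerfect (K2 i) := fun i =>
    (hsimple2 i).isPerfect_of_exists_mul_ne (hnonab2 i)
  exact le_antisymm
    (le_of_coprime_index_chain
      (fun N _ => Subgroup.eq_top_of_coprime_index_of_mulEquiv_pi hl.ne_one hdvd1 e1 N)
      s H2 htop2 hnorm2 hcop2)
    (le_of_coprime_index_chain
      (fun N _ => Subgroup.eq_top_of_coprime_index_of_mulEquiv_pi hl.ne_one hdvd2 e2 N)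
      r H1 htop1 hnorm1 hcop1)

theorem stmt8 (l : ℕ) (hl : l.Prime) {G : Type*} [Group G] [Finite G]
    (r s : ℕ) (hr : 0 < r) (hs : 0 < s)
    (H1 H2 : ℕ → Subgroup G)
    (htop1 : H1 (r - 1) = ⊤) (htop2 : H2 (s - 1) = ⊤)
    (hmono1 : ∀ i, i + 1 < r → H1 i ≤ H1 (i + 1))
    (hnorm1 : ∀ i, i + 1 < r → ((H1 i).subgroupOf (H1 (i + 1))).Normal)
    (hcop1 : ∀ i, i + 1 < r → Nat.Coprime ((H1 i).subgroupOf (H1 (i + 1))).index l)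
    (hmono2 : ∀ i, i + 1 < s → H2 i ≤ H2 (i + 1))
    (hnorm2 : ∀ i, i + 1 < s → ((H2 i).subgroupOf (H2 (i + 1))).Normal)
    (hcop2 : ∀ i, i + 1 < s → Nat.Coprime ((H2 i).subgroupOf (H2 (i + 1))).index l)
    (m1 : ℕ) (K1 : Fin m1 → Type*) [∀ i, Group (K1 i)] [∀ i, Finite (K1 i)]
    (hsimple1 : ∀ i, IsSimpleGroup (K1 i))
    (hnonab1 : ∀ i, ∃ a b : K1 i, a * b ≠ b * a)
    (hdvd1 : ∀ i, l ∣ Nat.card (K1 i))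
    (e1 : H1 0 ≃* ∀ i, K1 i)
    (m2 : ℕ) (K2 : Fin m2 → Type*) [∀ i, Group (K2 i)] [∀ i, Finite (K2 i)]
    (hsimple2 : ∀ i, IsSimpleGroup (K2 i))
    (hnonab2 : ∀ i, ∃ a b : K2 i, a * b ≠ b * a)
    (hdvd2 : ∀ i, l ∣ Nat.card (K2 i))
    (e2 : H2 0 ≃* ∀ i, K2 i) :
    H1 0 = H2 0 :=
  stmt8_general l hl r s H1 H2 htop1 htop2 hnorm1 hcop1 hnorm2 hcop2 m1 K1 hsimple1 hnonab1 hdvd1 e1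
    m2 K2 hsimple2 hnonab2 hdvd2 e2
end
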